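/- 10 ∫ℝ e^{−x} Q(x)³ dx = 9 ∫ℝ e^{−x} Q(x)² dx, where Q(x) = (3/2)/cosh²(x/2). -/

import Mathlib

noncomputable def Q (x : ℝ) : ℝ := (3/2) / (Real.cosh (x/2))^2

/-!
Substitute `t = tanh (x / 2)`. Then `dt = Q x / 3 dx` and `exp (-x) = (1 - t) / (1 + t)`, so
`∫ exp (-x) * Q x ^ (k + 2) dx = 2 (3/2)^(k+2) ∫_{-1}^{1} (1 - t)^2 (1 - t^2)^k dt`,
which is `12` for `k = 0` and `54/5` for `k = 1`; and `10 * 54/5 = 108 = 9 * 12`.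
The one-dimensional change of variables formula holds for the Bochner integral without any
integrability hypothesis, so no decay estimate for `Q` is needed.
-/

open MeasureTheory Real Set

lemma hasDerivAt_tanh (x : ℝ) : HasDerivAt tanh (cosh x ^ 2)⁻¹ x := by
  have h := (hasDerivAt_sinh x).div (hasDerivAt_cosh x) (cosh_pos x).ne'
  rw [show sinh / cosh = tanh from funext fun y => (tanh_eq_sinh_div_cosh y).symm] at h
  exact h.congr_deriv (by rw [← sq, ← sq, cosh_sq_sub_sinh_sq, one_div])

lemma one_sub_tanh_sq (x : ℝ) : 1 - tanh x ^ 2 = (cosh x ^ 2)⁻¹ := by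
  have hc := (cosh_pos x).ne'
  rw [tanh_eq_sinh_div_cosh]
  field_simp
  linear_combination cosh_sq_sub_sinh_sq x

lemma integral_inv_cosh_sq_smul_comp_tanh {E : Type*} [NormedAddCommGroup E]
    [NormedSpace ℝ E] (g : ℝ → E) :
    ∫ x, (cosh x ^ 2)⁻¹ • g (tanh x) = ∫ t in Ioo (-1) 1, g t := by
  have h := integral_image_eq_integral_abs_deriv_smul MeasurableSet.univ
    (fun x _ => (hasDerivAt_tanh x).hasDerivWithinAt) tanh_injective.injOn g
  simpa [tanh_bijOn.image_eq, abs_of_pos, cosh_pos] using h.symm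

lemma exp_neg_two_mul_eq (x : ℝ) : exp (-(2 * x)) = cosh x ^ 2 * (1 - tanh x) ^ 2 := by
  have hc := (cosh_pos x).ne'
  rw [show -(2 * x) = -x + -x by ring, exp_add, ← cosh_sub_sinh, tanh_eq_sinh_div_cosh]
  field_simp

lemma Q_two_mul (x : ℝ) : Q (2 * x) = 3 / 2 * (cosh x ^ 2)⁻¹ := by
  rw [Q, mul_div_cancel_left₀ x two_ne_zero, div_eq_mul_inv]

lemma exp_neg_two_mul_mul_Q_two_mul_pow (x : ℝ) (k : ℕ) :
    exp (-(2 * x)) * Q (2 * x) ^ (k + 2) =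
      (cosh x ^ 2)⁻¹ * ((3 / 2) ^ (k + 2) * ((1 - tanh x) ^ 2 * (1 - tanh x ^ 2) ^ k)) := by
  have hc : cosh x ^ 2 * (cosh x ^ 2)⁻¹ = 1 := mul_inv_cancel₀ (by positivity)
  rw [exp_neg_two_mul_eq, Q_two_mul, one_sub_tanh_sq]
  linear_combination (3 / 2) ^ (k + 2) * (1 - tanh x) ^ 2 * ((cosh x ^ 2)⁻¹) ^ (k + 1) * hc

lemma integral_exp_neg_mul_Q_pow (k : ℕ) :
    ∫ x, exp (-x) * Q x ^ (k + 2) =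
      2 * (3 / 2) ^ (k + 2) * ∫ t in (-1)..1, (1 - t) ^ 2 * (1 - t ^ 2) ^ k := by
  have hscale := Measure.integral_comp_mul_left (fun x => exp (-x) * Q x ^ (k + 2)) 2
  have hsub := integral_inv_cosh_sq_smul_comp_tanh
    fun t => (3 / 2 : ℝ) ^ (k + 2) * ((1 - t) ^ 2 * (1 - t ^ 2) ^ k)
  simp only [exp_neg_two_mul_mul_Q_two_mul_pow, smul_eq_mul] at hscale hsub
  rw [intervalIntegral.integral_of_le (by norm_num), integral_Ioc_eq_integral_Ioo, mul_assoc,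
    ← integral_const_mul, ← hsub, hscale]
  norm_num
  ring

lemma integral_exp_neg_mul_Q_sq : ∫ x, exp (-x) * Q x ^ 2 = 12 :=
  (integral_exp_neg_mul_Q_pow 0).trans <| by
    norm_num [intervalIntegral.integral_comp_sub_left fun t => t ^ 2]

lemma integral_exp_neg_mul_Q_cube : ∫ x, exp (-x) * Q x ^ 3 = 54 / 5 := by
  have hpoly (t : ℝ) : (1 - t) ^ 2 * (1 - t ^ 2) ^ 1 = 2 * (1 - t) ^ 3 - (1 - t) ^ 4 := by ring
  rw [integral_exp_neg_mul_Q_pow 1, funext hpoly,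
    intervalIntegral.integral_sub (Continuous.intervalIntegrable (by fun_prop) _ _)
      (Continuous.intervalIntegrable (by fun_prop) _ _),
    intervalIntegral.integral_const_mul]
  norm_num [intervalIntegral.integral_comp_sub_left fun t => t ^ 3,
    intervalIntegral.integral_comp_sub_left fun t => t ^ 4]

theorem exp_weighted_integrals :
    10 * (∫ x : ℝ, Real.exp (-x) * (Q x)^3) = 9 * ∫ x : ℝ, Real.exp (-x) * (Q x)^2 := by
  rw [integral_exp_neg_mul_Q_cube, integral_exp_neg_mul_Q_sq]
  norm_num
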